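/- Let M ≥ 1 and set c = (M − 1/2) Γ(M) / π^M. Let f : ℂ^M → [0,∞) be a measurable probability density with respect to Lebesgue measure that vanishes (a.e.) outside the closed unit ball, and assume that a ↦ f(a) log f(a) and a ↦ f(a) log‖a‖ are integrable. Then −∫ f(a) log f(a) da − ∫ f(a) log‖a‖ da ≤ −log c, with equality when f(a) = c ‖a‖^{−1} 𝟙{‖a‖ ≤ 1}. -/

import Mathlib

/-!
The density `g(a) = c ‖a‖⁻¹ 𝟙{‖a‖ ≤ 1}` integrates to `1`: in polar coordinates on `ℝ^{2M}`
its mass is `2M vol(B) ∫₀¹ r^{2M-2} dr = 1 / c`. On the support of `f`,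
`log g(a) = log c - log ‖a‖`, so the claim is Gibbs' inequality `-∫ f log f ≤ -∫ f log g`,
obtained by integrating the pointwise bound `x - y ≤ x (log x - log y)`; for `f = g` both sides
agree.
-/

open MeasureTheory Real

noncomputable instance (M : ℕ) : MeasurableSpace (EuclideanSpace ℂ (Fin M)) :=
  MeasurableSpace.comap WithLp.ofLp MeasurableSpace.pi

instance (M : ℕ) : BorelSpace (EuclideanSpace ℂ (Fin M)) := PiLp.borelSpace 2

open Set Metric Module

theorem Real.sub_le_mul_log_sub_log {x y : ℝ} (hx : 0 < x) (hy : 0 < y) :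
    x - y ≤ x * (log x - log y) := by
  have := one_sub_inv_le_log_of_pos (div_pos hx hy)
  rw [log_div hx.ne' hy.ne', inv_div] at this
  calc x - y = x * (1 - y / x) := by field_simp
    _ ≤ x * (log x - log y) := by gcongr

section Gibbs

variable {α : Type*} [MeasurableSpace α] {μ : Measure α} {f g φ : α → ℝ}

/-- `φ` plays the role of `log g` on the support of `f`; off that support `log g` may take junk
values, and `φ` is free there. -/
theorem integral_mul_le_integral_mul_log (hf : 0 ≤ᵐ[μ] f) (hg : 0 ≤ᵐ[μ] g)
    (hφ : ∀ᵐ a ∂μ, 0 < f a → 0 < g a ∧ log (g a) = φ a) (hf_int : Integrable f μ)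
    (hg_int : Integrable g μ) (hgf : ∫ a, g a ∂μ ≤ ∫ a, f a ∂μ)
    (hf_log : Integrable (fun a ↦ f a * log (f a)) μ) (hfφ : Integrable (fun a ↦ f a * φ a) μ) :
    ∫ a, f a * φ a ∂μ ≤ ∫ a, f a * log (f a) ∂μ := by
  have hfg_int : Integrable (fun a ↦ f a - g a) μ := hf_int.sub hg_int
  have key : ∫ a, f a * φ a + (f a - g a) ∂μ ≤ ∫ a, f a * log (f a) ∂μ := by
    refine integral_mono_ae (hfφ.add hfg_int) hf_log ?_
    filter_upwards [hf, hg, hφ] with a hfa hga hφa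
    rcases hfa.eq_or_lt with hfa | hfa
    · simpa [← hfa] using hga
    · obtain ⟨hga, hlog⟩ := hφa hfa
      rw [← hlog]
      linarith [Real.sub_le_mul_log_sub_log hfa hga]
  rw [integral_add hfφ hfg_int, integral_sub hf_int hg_int] at key
  linarith

theorem integral_mul_eq_integral_mul_log (hf : 0 ≤ᵐ[μ] f)
    (hφ : ∀ᵐ a ∂μ, 0 < f a → log (f a) = φ a) :
    ∫ a, f a * φ a ∂μ = ∫ a, f a * log (f a) ∂μ := by
  refine integral_congr_ae ?_
  filter_upwards [hf, hφ] with a hfa hφa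
  rcases hfa.eq_or_lt with hfa | hfa
  · simp [← hfa]
  · rw [hφa hfa]

end Gibbs

section Radial

variable {n : ℕ}

theorem eqOn_pow_mul_indicator_inv (hn : 2 ≤ n) :
    EqOn (fun y : ℝ ↦ y ^ (n - 1) • (Iic 1).indicator (fun r ↦ r⁻¹) y)
      ((Iic 1).indicator fun y ↦ y ^ (n - 2)) (Ioi 0) := by
  intro y (hy : 0 < y)
  by_cases hy1 : y ∈ Iic 1
  · simp only [indicator_of_mem hy1, smul_eq_mul]
    rw [show n - 1 = n - 2 + 1 by omega, pow_succ, mul_assoc, mul_inv_cancel₀ hy.ne', mul_one]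
  · simp [indicator_of_notMem hy1]

theorem integrableOn_pow_mul_indicator_inv (hn : 2 ≤ n) :
    IntegrableOn (fun y : ℝ ↦ y ^ (n - 1) • (Iic 1).indicator (fun r ↦ r⁻¹) y) (Ioi 0) := by
  rw [integrableOn_congr_fun (eqOn_pow_mul_indicator_inv hn) measurableSet_Ioi,
    IntegrableOn, integrable_indicator_iff measurableSet_Iic, IntegrableOn,
    Measure.restrict_restrict measurableSet_Iic, Iic_inter_Ioi]
  exact (intervalIntegral.intervalIntegrable_pow _).1

theorem integral_pow_mul_indicator_inv (hn : 2 ≤ n) :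
    ∫ y in Ioi (0 : ℝ), y ^ (n - 1) • (Iic 1).indicator (fun r : ℝ ↦ r⁻¹) y = 1 / (n - 1) := by
  rw [setIntegral_congr_fun measurableSet_Ioi (eqOn_pow_mul_indicator_inv hn),
    setIntegral_indicator measurableSet_Iic, Ioi_inter_Iic,
    ← intervalIntegral.integral_of_le zero_le_one, integral_pow]
  rw [one_pow, zero_pow (Nat.succ_ne_zero _), sub_zero, Nat.cast_sub hn]
  ring

end Radial

section InvNorm

variable {E : Type*} [NormedAddCommGroup E]

lemma indicator_closedBall_inv_norm (x : E) :
    (closedBall (0 : E) 1).indicator (fun x ↦ ‖x‖⁻¹) x =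
      (Iic 1).indicator (fun r : ℝ ↦ r⁻¹) ‖x‖ := by
  simp [indicator]

lemma ae_pos_and_log_indicator_closedBall_mul_inv_norm [MeasurableSpace E] {μ : Measure E}
    [NullSingletonClass μ] {f : E → ℝ} {c : ℝ} (hc : 0 < c)
    (hf : ∀ᵐ a ∂μ, a ∉ closedBall 0 1 → f a = 0) :
    ∀ᵐ a ∂μ, 0 < f a → 0 < (closedBall 0 1).indicator (fun a ↦ c * ‖a‖⁻¹) a ∧
      log ((closedBall 0 1).indicator (fun a ↦ c * ‖a‖⁻¹) a) = log c - log ‖a‖ := by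
  filter_upwards [hf, compl_mem_ae_iff.2 (measure_singleton (μ := μ) 0)]
    with a ha (h0 : a ≠ 0) hfa
  have hB : a ∈ closedBall 0 1 := by_contra fun hB ↦ hfa.ne' (ha hB)
  have ha₀ : 0 < ‖a‖ := norm_pos_iff.2 h0
  rw [indicator_of_mem hB, log_mul hc.ne' (inv_pos.2 ha₀).ne', log_inv]
  exact ⟨by positivity, by ring⟩

variable [NormedSpace ℝ E] [MeasurableSpace E] [BorelSpace E] [Nontrivial E]
  [FiniteDimensional ℝ E] (μ : Measure E) [μ.IsAddHaarMeasure]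

theorem integrableOn_closedBall_inv_norm (hE : 2 ≤ finrank ℝ E) :
    IntegrableOn (fun x ↦ ‖x‖⁻¹) (closedBall (0 : E) 1) μ := by
  rw [← integrable_indicator_iff measurableSet_closedBall, funext indicator_closedBall_inv_norm,
    integrable_fun_norm_addHaar]
  exact integrableOn_pow_mul_indicator_inv hE

theorem setIntegral_closedBall_inv_norm (hE : 2 ≤ finrank ℝ E) :
    ∫ x in closedBall (0 : E) 1, ‖x‖⁻¹ ∂μ =
      finrank ℝ E / (finrank ℝ E - 1) * μ.real (ball 0 1) := by
  rw [← integral_indicator measurableSet_closedBall, funext indicator_closedBall_inv_norm,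
    integral_fun_norm_addHaar, integral_pow_mul_indicator_inv hE, nsmul_eq_mul, smul_eq_mul]
  ring

end InvNorm

theorem EuclideanSpace.finrank_real_complex (M : ℕ) :
    finrank ℝ (EuclideanSpace ℂ (Fin M)) = 2 * M := by
  rw [finrank_real_of_complex, finrank_euclideanSpace_fin]

theorem EuclideanSpace.two_le_finrank_real_complex {M : ℕ} (hM : 1 ≤ M) :
    2 ≤ finrank ℝ (EuclideanSpace ℂ (Fin M)) := by
  rw [EuclideanSpace.finrank_real_complex]
  omega

theorem EuclideanSpace.setIntegral_closedBall_inv_norm_complex {M : ℕ} (hM : 1 ≤ M) :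
    ∫ x in closedBall (0 : EuclideanSpace ℂ (Fin M)) 1, ‖x‖⁻¹ =
      ((M - 1 / 2) * Gamma M / π ^ M)⁻¹ := by
  have : Nonempty (Fin M) := ⟨⟨0, hM⟩⟩
  rw [setIntegral_closedBall_inv_norm _ (EuclideanSpace.two_le_finrank_real_complex hM),
    measureReal_def, InnerProductSpace.volume_ball_of_dim_even
      (EuclideanSpace.finrank_real_complex M), EuclideanSpace.finrank_real_complex]
  obtain ⟨k, rfl⟩ := Nat.exists_eq_add_of_le' hM
  rw [ENNReal.ofReal_one, one_pow, one_mul, ENNReal.toReal_ofReal (by positivity),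
    Nat.factorial_succ]
  push_cast
  rw [Gamma_nat_eq_factorial]
  field_simp

theorem maxEntropy_inv_norm_density_general (M : ℕ) (hM : 1 ≤ M)
    (c : ℝ) (hc : c = ((M : ℝ) - 1 / 2) * Real.Gamma M / π ^ M)
    (f : EuclideanSpace ℂ (Fin M) → ℝ)
    (hf_nonneg : ∀ a, 0 ≤ f a)
    (hf_prob : ∫ a, f a = 1)
    (hf_supp : ∀ᵐ a : EuclideanSpace ℂ (Fin M),
      a ∉ Metric.closedBall (0 : EuclideanSpace ℂ (Fin M)) 1 → f a = 0)
    (hf_int₁ : Integrable fun a => f a * Real.log (f a))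
    (hf_int₂ : Integrable fun a : EuclideanSpace ℂ (Fin M) => f a * Real.log ‖a‖) :
    (-∫ a, f a * Real.log (f a)) - (∫ a : EuclideanSpace ℂ (Fin M), f a * Real.log ‖a‖)
        ≤ -Real.log c ∧
      ((∀ a : EuclideanSpace ℂ (Fin M),
          f a = (Metric.closedBall (0 : EuclideanSpace ℂ (Fin M)) 1).indicator
            (fun a => c * ‖a‖⁻¹) a) →
        (-∫ a, f a * Real.log (f a))
            - (∫ a : EuclideanSpace ℂ (Fin M), f a * Real.log ‖a‖) = -Real.log c) := by
  have : Nonempty (Fin M) := ⟨⟨0, hM⟩⟩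
  have hM₁ : (1 : ℝ) ≤ M := Nat.one_le_cast.2 hM
  have hc_pos : 0 < c :=
    hc ▸ div_pos (mul_pos (by linarith) (Gamma_pos_of_pos (by linarith))) (by positivity)
  set g := (closedBall (0 : EuclideanSpace ℂ (Fin M)) 1).indicator fun a ↦ c * ‖a‖⁻¹
  have hg_int : Integrable g := (integrable_indicator_iff measurableSet_closedBall).2
    ((integrableOn_closedBall_inv_norm volume
      (EuclideanSpace.two_le_finrank_real_complex hM)).const_mul c)
  have hg_one : ∫ a, g a = 1 := by
    rw [integral_indicator measurableSet_closedBall, integral_const_mul,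
      EuclideanSpace.setIntegral_closedBall_inv_norm_complex hM, ← hc,
      mul_inv_cancel₀ hc_pos.ne']
  have hf_int : Integrable f := .of_integral_ne_zero (by simp [hf_prob])
  have hφ_int : Integrable fun a ↦ f a * (log c - log ‖a‖) := by
    simp only [mul_sub]
    exact (hf_int.mul_const _).sub hf_int₂
  have h_cross : ∫ a, f a * (log c - log ‖a‖) = log c - ∫ a, f a * log ‖a‖ := by
    simp only [mul_sub]
    rw [integral_sub (hf_int.mul_const _) hf_int₂, integral_mul_const, hf_prob, one_mul]
  have h_log := ae_pos_and_log_indicator_closedBall_mul_inv_norm hc_pos hf_supp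
  refine ⟨?_, fun hfg ↦ ?_⟩
  · have := integral_mul_le_integral_mul_log (.of_forall hf_nonneg)
      (.of_forall (indicator_nonneg fun a _ ↦ by positivity)) h_log hf_int hg_int
      (by rw [hg_one, hf_prob]) hf_int₁ hφ_int
    linarith
  · have := integral_mul_eq_integral_mul_log (.of_forall hf_nonneg)
      (φ := fun a ↦ log c - log ‖a‖) (h_log.mono fun a h hfa ↦ hfg a ▸ (h hfa).2)
    linarith

/-- Maximum-entropy property: among probability densities `f` on `ℂ^M` supported in the
closed unit ball, the quantity `h(f) - E_f[log‖a‖] = -∫ f log f - ∫ f log‖a‖` is at most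
`-log c` with `c = (M - 1/2) Γ(M) / π^M`, with equality for `f(a) = c ‖a‖⁻¹ 𝟙{‖a‖ ≤ 1}`. -/
theorem maxEntropy_inv_norm_density (M : ℕ) (hM : 1 ≤ M)
    (c : ℝ) (hc : c = ((M : ℝ) - 1 / 2) * Real.Gamma M / π ^ M)
    (f : EuclideanSpace ℂ (Fin M) → ℝ)
    (hf_meas : Measurable f) (hf_nonneg : ∀ a, 0 ≤ f a)
    (hf_prob : ∫ a, f a = 1)
    (hf_supp : ∀ᵐ a : EuclideanSpace ℂ (Fin M),
      a ∉ Metric.closedBall (0 : EuclideanSpace ℂ (Fin M)) 1 → f a = 0)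
    (hf_int₁ : Integrable fun a => f a * Real.log (f a))
    (hf_int₂ : Integrable fun a : EuclideanSpace ℂ (Fin M) => f a * Real.log ‖a‖) :
    (-∫ a, f a * Real.log (f a)) - (∫ a : EuclideanSpace ℂ (Fin M), f a * Real.log ‖a‖)
        ≤ -Real.log c ∧
      ((∀ a : EuclideanSpace ℂ (Fin M),
          f a = (Metric.closedBall (0 : EuclideanSpace ℂ (Fin M)) 1).indicator
            (fun a => c * ‖a‖⁻¹) a) →
        (-∫ a, f a * Real.log (f a))
            - (∫ a : EuclideanSpace ℂ (Fin M), f a * Real.log ‖a‖) = -Real.log c) :=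
  maxEntropy_inv_norm_density_general M hM c hc f hf_nonneg hf_prob hf_supp hf_int₁ hf_int₂
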